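/- arXiv:2412.15472 — 9 statements merged into one kernel-verified Lean document; each statement's English description precedes it below -/
import Mathlib

section
/- Let n ≥ 2 and let f : ℝ≥0 → ℝ ∪ {−∞} be a strictly increasing function that satisfies Condition 6b. Then for every positive-admitting integer-valued instance with n agents, every allocation chosen by the additive welfarist rule with f is EF1. -/
/-!
Suppose agent `i` envies `j` even after the removal of any single good. Among the goods of `A j`
that `i` values positively, take `g` minimising `u j g / u i g`. Summing the ratio inequality over
`A j \ {g}` and using that utilities are integers (so envy means a gap of at least one) gives
`u j g * (u i (A i) + 1) ≤ u i g * u j (A j \ {g})`, which is the hypothesis of Condition 6b with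
`x = u j (A j \ {g})`, `a = u j g`, `y = u i (A i)`, `b = u i g`. Hence moving `g` from `j` to `i`
strictly increases welfare. Positive-admissibility makes every term of an optimal welfare finite,
so the comparison only involves the two changed terms.
-/

open scoped BigOperators

noncomputable section

namespace FairDiv

/-- The bundle of goods received by agent `i` under the assignment `A` of goods to agents. -/
def bundle {n m : ℕ} (A : Fin m → Fin n) (i : Fin n) : Finset (Fin m) :=
  Finset.univ.filter fun g => A g = i

/-- Additive utility of agent `i` for a set `S` of goods. -/
def util {n m : ℕ} (u : Fin n → Fin m → ℝ) (i : Fin n) (S : Finset (Fin m)) : ℝ :=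
  ∑ g ∈ S, u i g

/-- Envy-freeness up to one good. -/
def EF1 {n m : ℕ} (u : Fin n → Fin m → ℝ) (A : Fin m → Fin n) : Prop :=
  ∀ i j : Fin n, bundle A j ≠ ∅ →
    ∃ g ∈ bundle A j, util u i ((bundle A j).erase g) ≤ util u i (bundle A i)

/-- Welfare of an allocation under the additive welfarist rule with function `f`. -/
def welfare {n m : ℕ} (f : ℝ → EReal) (u : Fin n → Fin m → ℝ) (A : Fin m → Fin n) : EReal :=
  ∑ i : Fin n, f (util u i (bundle A i))

/-- An allocation is chosen by the additive welfarist rule with `f` if it maximizes welfare. -/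
def Chosen {n m : ℕ} (f : ℝ → EReal) (u : Fin n → Fin m → ℝ) (A : Fin m → Fin n) : Prop :=
  ∀ B : Fin m → Fin n, welfare f u B ≤ welfare f u A

/-- An instance is positive-admitting if some allocation gives everyone positive utility. -/
def PositiveAdmitting {n m : ℕ} (u : Fin n → Fin m → ℝ) : Prop :=
  ∃ B : Fin m → Fin n, ∀ i : Fin n, 0 < util u i (bundle B i)

def IdenticalGood {n m : ℕ} (u : Fin n → Fin m → ℝ) : Prop :=
  ∀ i : Fin n, ∃ a : ℝ, 0 < a ∧ ∀ g : Fin m, u i g = a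

def TwoValue {n m : ℕ} (u : Fin n → Fin m → ℝ) : Prop :=
  ∃ a₁ a₂ : ℝ, a₁ ≠ a₂ ∧ 0 ≤ a₁ ∧ 0 ≤ a₂ ∧ ∀ i g, u i g = a₁ ∨ u i g = a₂

def Normalized {n m : ℕ} (u : Fin n → Fin m → ℝ) : Prop :=
  ∀ i j : Fin n, util u i Finset.univ = util u j Finset.univ

def IntegerValued {n m : ℕ} (u : Fin n → Fin m → ℝ) : Prop :=
  ∀ i g, ∃ z : ℕ, u i g = (z : ℝ)

def Binary {n m : ℕ} (u : Fin n → Fin m → ℝ) : Prop :=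
  ∀ i g, u i g = 0 ∨ u i g = 1

/-- `Δ_{f,k}(x) = f((k+1)x) − f(kx)`, valued in `EReal` (it is `+∞` iff `f(kx) = −∞`). -/
def Delta (f : ℝ → EReal) (k : ℕ) (x : ℝ) : EReal :=
  f (((k : ℝ) + 1) * x) - f ((k : ℝ) * x)

/-- Condition 1: `Δ_{f,k}(b) > Δ_{f,k+1}(a)` for all `k ∈ ℤ≥0` and `a, b ∈ ℝ>0`. -/
def Cond1 (f : ℝ → EReal) : Prop :=
  ∀ k : ℕ, ∀ a b : ℝ, 0 < a → 0 < b → Delta f (k + 1) a < Delta f k b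

/-- Condition 1a: `Δ_{f,k}` is constant on `ℝ>0` for every `k ∈ ℤ>0`. -/
def Cond1a (f : ℝ → EReal) : Prop :=
  ∀ k : ℕ, 0 < k → ∀ x y : ℝ, 0 < x → 0 < y → Delta f k x = Delta f k y

/-- Condition 2. -/
def Cond2 (f : ℝ → EReal) : Prop :=
  ∀ a b c d : ℝ, 0 ≤ a → 0 ≤ b → 0 ≤ c → 0 ≤ d →
    min a b ≤ min c d → a * b < c * d → f a + f b < f c + f d

/-- Condition 3: `Δ_{f,k}(b) > Δ_{f,k+1}(a)` for all `k ∈ ℤ≥0` and `a, b ∈ ℤ>0`. -/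
def Cond3 (f : ℝ → EReal) : Prop :=
  ∀ k : ℕ, ∀ a b : ℕ, 0 < a → 0 < b → Delta f (k + 1) (a : ℝ) < Delta f k (b : ℝ)

/-- Condition 3a. -/
def Cond3a (f : ℝ → EReal) : Prop :=
  ∀ k l : ℕ, l < k → ∀ a b : ℕ, 0 < a → 0 < b → Delta f k (a : ℝ) < Delta f l (b : ℝ)

/-- Condition 3b: `Δ_{f,k}(1) > Δ_{f,k+1}(a) > Δ_{f,k+2}(1)` for `k ∈ ℤ≥0`, `a ∈ ℤ>0`. -/
def Cond3b (f : ℝ → EReal) : Prop :=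
  ∀ k : ℕ, ∀ a : ℕ, 0 < a →
    Delta f (k + 1) (a : ℝ) < Delta f k 1 ∧ Delta f (k + 2) 1 < Delta f (k + 1) (a : ℝ)

/-- Condition 4: `Δ_{f,k}(1) > Δ_{f,k+1}(1)` for all `k ∈ ℤ≥0`. -/
def Cond4 (f : ℝ → EReal) : Prop :=
  ∀ k : ℕ, Delta f (k + 1) 1 < Delta f k 1

/-- Condition 5. -/
def Cond5 (f : ℝ → EReal) : Prop :=
  ∀ a b k l r : ℕ, 0 < a → 0 < b → b ≤ a → l * b + r * a < (k + 1) * b →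
    Delta f (k + 1) (a : ℝ) <
        f (((l : ℝ) + 1) * (b : ℝ) + (r : ℝ) * (a : ℝ)) - f ((l : ℝ) * (b : ℝ) + (r : ℝ) * (a : ℝ))
      ∧ Delta f (k + 2) 1 < Delta f (k + 1) (a : ℝ)

/-- Condition 6a: `f((k+1)b−1) − f(kb−1) > Δ_{f,k}(a)` for all `k, a, b ∈ ℤ>0`. -/
def Cond6a (f : ℝ → EReal) : Prop :=
  ∀ k a b : ℕ, 0 < k → 0 < a → 0 < b →
    Delta f k (a : ℝ) < f (((k : ℝ) + 1) * (b : ℝ) - 1) - f ((k : ℝ) * (b : ℝ) - 1)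

/-- Condition 6b: `f(y+b) − f(y) > f(x+a) − f(x)` whenever `x/a ≥ (y+1)/b`. -/
def Cond6b (f : ℝ → EReal) : Prop :=
  ∀ a b : ℕ, ∀ x y : ℕ, 0 < a → 0 < b → ((y : ℝ) + 1) / (b : ℝ) ≤ (x : ℝ) / (a : ℝ) →
    f ((x : ℝ) + (a : ℝ)) - f (x : ℝ) < f ((y : ℝ) + (b : ℝ)) - f (y : ℝ)

/-- Modified logarithmic function `λ_c(x) = log (x + c)`, with `log 0 = −∞`. -/
def lam (c : ℝ) (x : ℝ) : EReal :=
  if x + c = 0 then ⊥ else ((Real.log (x + c) : ℝ) : EReal)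

/-- The `p`-mean function `φ_p`, with `φ_p(0) = −∞` for `p ≤ 0`. -/
def phi (p : ℝ) (x : ℝ) : EReal :=
  if 0 < p then ((x ^ p : ℝ) : EReal)
  else if x = 0 then ⊥
  else if p = 0 then ((Real.log x : ℝ) : EReal)
  else ((-(x ^ p) : ℝ) : EReal)

/-- Modified harmonic number `h_c` on nonnegative integers. -/
def hmod (c : ℝ) (x : ℕ) : EReal :=
  if c = -1 then
    (if x = 0 then (⊥ : EReal)
     else (((∑ t ∈ Finset.range (x - 1), (1 : ℝ) / ((t : ℝ) + 1)) : ℝ) : EReal))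
  else (((∑ t ∈ Finset.range x, (1 : ℝ) / ((t : ℝ) + 1 + c)) : ℝ) : EReal)

/-- Condition 3b for a function defined on nonnegative integers. -/
def Cond3bNat (f : ℕ → EReal) : Prop :=
  ∀ k : ℕ, ∀ a : ℕ, 0 < a →
    f ((k + 2) * a) - f ((k + 1) * a) < f (k + 1) - f k
    ∧ f (k + 3) - f (k + 2) < f ((k + 2) * a) - f ((k + 1) * a)


theorem exists_sum_eq_coe {ι : Type*} {s : Finset ι} {F : ι → EReal}
    (h : ∀ k ∈ s, ∃ r : ℝ, F k = r) : ∃ r : ℝ, ∑ k ∈ s, F k = r :=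
  Finset.sum_induction F (fun x => ∃ r : ℝ, x = r)
    (fun _ _ ⟨a, ha⟩ ⟨b, hb⟩ => ⟨a + b, by rw [ha, hb, EReal.coe_add]⟩) ⟨0, EReal.coe_zero.symm⟩ h

theorem add_le_add_of_sum_le_sum {ι : Type*} [Fintype ι] [DecidableEq ι] {F G : ι → EReal}
    {i j : ι} (hij : i ≠ j) (hGF : ∀ k, k ≠ i → k ≠ j → G k = F k)
    (hF : ∀ k, k ≠ i → k ≠ j → ∃ r : ℝ, F k = r) (h : ∑ k, G k ≤ ∑ k, F k) :
    G i + G j ≤ F i + F j := by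
  set rest := (Finset.univ.erase i).erase j
  have hrest {k} (hk : k ∈ rest) : k ≠ i ∧ k ≠ j :=
    ⟨Finset.ne_of_mem_erase (Finset.mem_of_mem_erase hk), Finset.ne_of_mem_erase hk⟩
  have split (H : ι → EReal) : ∑ k, H k = H i + H j + ∑ k ∈ rest, H k := by
    rw [add_assoc, Finset.add_sum_erase _ _ (Finset.mem_erase.2 ⟨hij.symm, Finset.mem_univ j⟩),
      Finset.add_sum_erase _ _ (Finset.mem_univ i)]
  obtain ⟨r, hr⟩ := exists_sum_eq_coe fun k hk => hF k (hrest hk).1 (hrest hk).2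
  rw [split G, split F, Finset.sum_congr rfl fun k hk => hGF k (hrest hk).1 (hrest hk).2, hr] at h
  exact (EReal.addLECancellable_coe r).add_le_add_iff_right.1 h

theorem exists_mul_sum_erase_le {α : Type*} [DecidableEq α] {s : Finset α} {v w : α → ℝ}
    (hw : ∀ h ∈ s, 0 ≤ w h) (hv : ∃ h ∈ s, 0 < v h) :
    ∃ g ∈ s, 0 < v g ∧ w g * ∑ h ∈ s.erase g, v h ≤ v g * ∑ h ∈ s.erase g, w h := by
  obtain ⟨g, hg, hmin⟩ := (s.filter (0 < v ·)).exists_min_image (fun h => w h / v h)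
    (by simpa only [Finset.Nonempty, Finset.mem_filter] using hv)
  rw [Finset.mem_filter] at hg
  refine ⟨g, hg.1, hg.2, ?_⟩
  rw [Finset.mul_sum, Finset.mul_sum]
  refine Finset.sum_le_sum fun h hh => ?_
  have hh := Finset.mem_of_mem_erase hh
  rcases le_or_gt (v h) 0 with hle | hpos
  · nlinarith [mul_nonpos_of_nonneg_of_nonpos (hw g hg.1) hle, mul_nonneg hg.2.le (hw h hh)]
  · have := (div_le_div_iff₀ hg.2 hpos).1 (hmin h (Finset.mem_filter.2 ⟨hh, hpos⟩))
    linarith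

variable {n m : ℕ} {f : ℝ → EReal} {u : Fin n → Fin m → ℝ} {A : Fin m → Fin n}

theorem util_nonneg (hu : ∀ i g, 0 ≤ u i g) (i : Fin n) (S : Finset (Fin m)) :
    0 ≤ util u i S :=
  Finset.sum_nonneg fun g _ => hu i g

theorem util_erase_add (u : Fin n → Fin m → ℝ) (i : Fin n) {S : Finset (Fin m)} {g : Fin m}
    (hg : g ∈ S) :
    util u i (S.erase g) + u i g = util u i S :=
  Finset.sum_erase_add _ _ hg

theorem util_insert (u : Fin n → Fin m → ℝ) (i : Fin n) {S : Finset (Fin m)} {g : Fin m}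
    (hg : g ∉ S) :
    util u i (insert g S) = util u i S + u i g := by
  rw [util, Finset.sum_insert hg, add_comm, util]

theorem IntegerValued.exists_util_eq_natCast (hint : IntegerValued u) (i : Fin n)
    (S : Finset (Fin m)) : ∃ z : ℕ, util u i S = z := by
  choose v hv using hint
  exact ⟨∑ g ∈ S, v i g, by simp [util, hv]⟩

theorem IntegerValued.util_add_one_le_of_lt (hint : IntegerValued u) {i : Fin n}
    {S T : Finset (Fin m)} (h : util u i S < util u i T) : util u i S + 1 ≤ util u i T := by
  obtain ⟨s, hs⟩ := hint.exists_util_eq_natCast i S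
  obtain ⟨t, ht⟩ := hint.exists_util_eq_natCast i T
  rw [hs, ht] at h ⊢
  exact_mod_cast (Nat.cast_lt.1 h : s < t)

theorem bundle_update_self (A : Fin m → Fin n) (g : Fin m) (i : Fin n) :
    bundle (Function.update A g i) i = insert g (bundle A i) := by
  ext h
  by_cases hh : h = g <;> simp [bundle, hh]

theorem bundle_update_of_ne (A : Fin m → Fin n) (g : Fin m) {i k : Fin n} (hki : k ≠ i) :
    bundle (Function.update A g i) k = (bundle A k).erase g := by
  ext h
  by_cases hh : h = g <;> simp [bundle, hh, hki.symm]

theorem ne_bot_of_pos (hfmono : StrictMonoOn f (Set.Ici 0)) {x : ℝ} (hx : 0 < x) : f x ≠ ⊥ :=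
  (bot_le.trans_lt (hfmono Set.self_mem_Ici hx.le hx)).ne'

theorem Chosen.apply_util_ne_bot (hfmono : StrictMonoOn f (Set.Ici 0))
    (hftop : ∀ x : ℝ, 0 ≤ x → f x ≠ ⊤) (hpos : PositiveAdmitting u) (hA : Chosen f u A)
    (k : Fin n) : f (util u k (bundle A k)) ≠ ⊥ := by
  obtain ⟨B, hB⟩ := hpos
  obtain ⟨r, hr⟩ : ∃ r : ℝ, welfare f u B = r := exists_sum_eq_coe fun k _ =>
    ⟨_, (EReal.coe_toReal (hftop _ (hB k).le) (ne_bot_of_pos hfmono (hB k))).symm⟩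
  intro hk
  have hle := hA B
  rw [hr, welfare, ← Finset.add_sum_erase _ _ (Finset.mem_univ k), hk, EReal.bot_add] at hle
  exact EReal.coe_ne_bot r (le_bot_iff.1 hle)

theorem Chosen.exchange_le (hA : Chosen f u A) {g : Fin m} {i j : Fin n} (hAg : A g = j)
    (hij : i ≠ j) (hfin : ∀ k, ∃ r : ℝ, f (util u k (bundle A k)) = r) :
    f (util u i (bundle A i) + u i g) + f (util u j ((bundle A j).erase g)) ≤
      f (util u i (bundle A i)) + f (util u j ((bundle A j).erase g) + u j g) := by
  have hgj : g ∈ bundle A j := by simp [bundle, hAg]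
  have hgi : g ∉ bundle A i := by simp [bundle, hAg, hij.symm]
  have hle := add_le_add_of_sum_le_sum hij (F := fun k => f (util u k (bundle A k)))
    (G := fun k => f (util u k (bundle (Function.update A g i) k)))
    (fun k hki hkj => by
      rw [bundle_update_of_ne A g hki, Finset.erase_eq_of_notMem (by simp [bundle, hAg, hkj.symm])])
    (fun k _ _ => hfin k) (hA _)
  rw [util_erase_add u j hgj]
  simpa only [bundle_update_self, bundle_update_of_ne A g hij.symm, util_insert u i hgi] using hle

theorem Cond6b.add_lt_add (hcond : Cond6b f) (hfmono : StrictMonoOn f (Set.Ici 0))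
    (hftop : ∀ x : ℝ, 0 ≤ x → f x ≠ ⊤) {a b x y : ℕ} (hb : 0 < b)
    (hxy : (a : ℝ) * (y + 1) ≤ b * x) (hy : f y ≠ ⊥) (hxa : f ((x : ℝ) + a) ≠ ⊥) :
    f y + f ((x : ℝ) + a) < f ((y : ℝ) + b) + f x := by
  have hyb : f y < f ((y : ℝ) + b) :=
    hfmono (Set.mem_Ici.2 (by positivity)) (Set.mem_Ici.2 (by positivity)) (by simpa using hb)
  rcases Nat.eq_zero_or_pos a with rfl | ha
  · rw [Nat.cast_zero, add_zero] at hxa ⊢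
    lift f x to ℝ using ⟨hftop _ (by positivity), hxa⟩ with p
    exact EReal.add_lt_add_right_coe hyb p
  · have h6 := hcond a b x y ha hb <| by
      rw [div_le_div_iff₀ (by positivity) (by positivity)]
      linarith
    have hx : f x ≠ ⊥ := fun hx => by
      rw [hx, EReal.sub_bot hxa] at h6
      exact not_top_lt h6
    lift f x to ℝ using ⟨hftop _ (by positivity), hx⟩ with p
    lift f y to ℝ using ⟨hftop _ (by positivity), hy⟩ with q
    lift f ((x : ℝ) + a) to ℝ using ⟨hftop _ (by positivity), hxa⟩ with r
    lift f ((y : ℝ) + b) to ℝ using ⟨hftop _ (by positivity), hyb.ne_bot⟩ with s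
    norm_cast at h6 hyb ⊢
    linarith

theorem integer_general_sufficient_general (n : ℕ) (f : ℝ → EReal)
    (hfmono : StrictMonoOn f (Set.Ici (0 : ℝ)))
    (hftop : ∀ x : ℝ, 0 ≤ x → f x ≠ ⊤)
    (hcond : Cond6b f) :
    (∀ m : ℕ, ∀ u : Fin n → Fin m → ℝ, (∀ i g, 0 ≤ u i g) →
        IntegerValued u → PositiveAdmitting u →
        ∀ A : Fin m → Fin n, Chosen f u A → EF1 u A) := by
  intro m u hu hint hpos A hA i j hj
  by_contra hEF1
  push Not at hEF1
  obtain ⟨g₀, hg₀⟩ := Finset.nonempty_iff_ne_empty.2 hj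
  have hvalued : ∃ h ∈ bundle A j, 0 < u i h := by
    have hsum : ∑ _h ∈ bundle A j, (0 : ℝ) < util u i (bundle A j) := by
      rw [Finset.sum_const_zero, ← util_erase_add u i hg₀]
      linarith [util_nonneg hu i (bundle A i), hEF1 g₀ hg₀, hu i g₀]
    exact Finset.exists_lt_of_sum_lt hsum
  obtain ⟨g, hg, hg_pos, hratio⟩ := exists_mul_sum_erase_le (fun h _ => hu j h) hvalued
  have hij : i ≠ j := by
    rintro rfl
    linarith [util_erase_add u i hg, hEF1 g hg, hu i g]
  have hcross : u j g * (util u i (bundle A i) + 1) ≤ u i g * util u j ((bundle A j).erase g) :=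
    (mul_le_mul_of_nonneg_left (hint.util_add_one_le_of_lt (hEF1 g hg)) (hu j g)).trans hratio
  have hbot k := hA.apply_util_ne_bot hfmono hftop hpos k
  have hle := hA.exchange_le (Finset.mem_filter.1 hg).2 hij fun k =>
    ⟨_, (EReal.coe_toReal (hftop _ (util_nonneg hu k _)) (hbot k)).symm⟩
  have hxa := hbot j
  rw [← util_erase_add u j hg] at hxa
  obtain ⟨a, ha⟩ := hint j g
  obtain ⟨b, hb⟩ := hint i g
  obtain ⟨x, hx⟩ := hint.exists_util_eq_natCast j ((bundle A j).erase g)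
  obtain ⟨y, hy⟩ := hint.exists_util_eq_natCast i (bundle A i)
  rw [ha, hx] at hxa
  rw [ha, hb, hx, hy] at hcross hle
  have hb_pos : 0 < b := by exact_mod_cast hb ▸ hg_pos
  exact (hcond.add_lt_add hfmono hftop hb_pos hcross (hy ▸ hbot i) hxa).not_ge hle

theorem integer_general_sufficient (n : ℕ) (hn : 2 ≤ n) (f : ℝ → EReal)
    (hfmono : StrictMonoOn f (Set.Ici (0 : ℝ)))
    (hftop : ∀ x : ℝ, 0 ≤ x → f x ≠ ⊤)
    (hcond : Cond6b f) :
    (∀ m : ℕ, ∀ u : Fin n → Fin m → ℝ, (∀ i g, 0 ≤ u i g) →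
        IntegerValued u → PositiveAdmitting u →
        ∀ A : Fin m → Fin n, Chosen f u A → EF1 u A) :=
  integer_general_sufficient_general n f hfmono hftop hcond

end FairDiv
end
end

section
/- Let f : ℝ≥0 → ℝ ∪ {−∞} be a strictly increasing function that satisfies Condition 1. Then f satisfies Condition 1a, i.e., for every k ∈ ℤ>0, the function Δ_{f,k} is constant on ℝ>0. -/
open scoped BigOperators

noncomputable section

namespace FairDiv

/-!
On `(0, ∞)` the function `f` is real-valued, so it suffices to argue with real increments.
Splitting `[kx, (k+1)x]` into `q` equal steps writes `Δ_k(x)` as a sum of `q` increments of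
index `qk + j` at `x / q`; Condition 1 lets each step at `y` be paired with the previous step
at `x`, so `Δ_k(y) - Δ_k(x) ≤ Δ_{qk}(y / q)`. With `q = 2p`, the same subdivision shows
`p Δ_{2pk}(y / 2p) < Δ_k(y)`, hence `Δ_k(y) - Δ_k(x) ≤ Δ_k(y) / p` for every `p`.
-/

open Finset Filter

def realDelta (g : ℝ → ℝ) (k : ℕ) (x : ℝ) : ℝ :=
  g (((k : ℝ) + 1) * x) - g ((k : ℝ) * x)

theorem realDelta_eq_sum (g : ℝ → ℝ) (k : ℕ) {q : ℕ} (hq : 0 < q) (x : ℝ) :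
    realDelta g k x = ∑ j ∈ range q, realDelta g (q * k + j) (x / q) := by
  have hq' : (q : ℝ) ≠ 0 := by positivity
  let h : ℕ → ℝ := fun j => g ((q * k + j : ℝ) * (x / q))
  have hterm : ∀ j ∈ range q, realDelta g (q * k + j) (x / q) = h (j + 1) - h j := by
    intro j _
    simp only [realDelta, h]
    push_cast
    ring_nf
  rw [sum_congr rfl hterm, sum_range_sub]
  simp only [realDelta, h]
  congr 2
  · field_simp
  · field_simp; ring

section Decreasing

variable {g : ℝ → ℝ}

theorem realDelta_nonneg (hg : MonotoneOn g (Set.Ioi 0)) {k : ℕ} (hk : 0 < k) {x : ℝ}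
    (hx : 0 < x) : 0 ≤ realDelta g k x := by
  have hkx : 0 < (k : ℝ) * x := by positivity
  exact sub_nonneg.2 (hg (Set.mem_Ioi.2 hkx) (Set.mem_Ioi.2 (by positivity)) (by linarith))

variable (hdec : ∀ k : ℕ, 0 < k → ∀ a b : ℝ, 0 < a → 0 < b →
  realDelta g (k + 1) a < realDelta g k b)
include hdec

theorem realDelta_lt_of_lt {m n : ℕ} (hm : 0 < m) (hmn : m < n) {a b : ℝ} (ha : 0 < a)
    (hb : 0 < b) : realDelta g n a < realDelta g m b := by
  induction n, hmn using Nat.le_induction with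
  | base => exact hdec m hm a b ha hb
  | succ n hmn ih => exact (hdec n (hm.trans hmn) a a ha ha).trans ih

theorem realDelta_sub_le (hg : MonotoneOn g (Set.Ioi 0)) {k q : ℕ} (hk : 0 < k) (hq : 0 < q)
    {x y : ℝ} (hx : 0 < x) (hy : 0 < y) :
    realDelta g k y - realDelta g k x ≤ realDelta g (q * k) (y / q) := by
  obtain ⟨r, rfl⟩ := Nat.exists_eq_add_one_of_ne_zero hq.ne'
  have hx' : 0 < x / (r + 1 : ℕ) := by positivity
  have hy' : 0 < y / (r + 1 : ℕ) := by positivity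
  have hpaired : ∑ j ∈ range r, realDelta g ((r + 1) * k + (j + 1)) (y / (r + 1 : ℕ))
      ≤ ∑ j ∈ range r, realDelta g ((r + 1) * k + j) (x / (r + 1 : ℕ)) :=
    sum_le_sum fun j _ =>
      (hdec _ (Nat.add_pos_left (Nat.mul_pos r.succ_pos hk) _) _ _ hy' hx').le
  have hlast := realDelta_nonneg hg (k := (r + 1) * k + r) (by positivity) hx'
  rw [realDelta_eq_sum g k hq y, realDelta_eq_sum g k hq x, sum_range_succ', sum_range_succ,
    add_zero]
  linarith

theorem mul_realDelta_lt {k p : ℕ} (hk : 0 < k) (hp : 0 < p) {y : ℝ} (hy : 0 < y) :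
    p * realDelta g (2 * p * k) (y / (2 * p : ℕ)) < realDelta g k y := by
  have hy' : 0 < y / (2 * p : ℕ) := by positivity
  calc (p : ℝ) * realDelta g (2 * p * k) (y / (2 * p : ℕ))
      = ∑ _j ∈ range p, realDelta g (2 * p * k) (y / (2 * p : ℕ)) := by simp
    _ < ∑ j ∈ range p, realDelta g (p * k + j) (y / p) :=
        sum_lt_sum_of_nonempty (nonempty_range_iff.2 hp.ne') fun j hj =>
          realDelta_lt_of_lt hdec (by positivity)
            (by have := mem_range.1 hj; nlinarith) hy' (by positivity)
    _ = realDelta g k y := (realDelta_eq_sum g k hp y).symm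

theorem realDelta_eq_of_pos (hg : MonotoneOn g (Set.Ioi 0)) {k : ℕ} (hk : 0 < k) {x y : ℝ}
    (hx : 0 < x) (hy : 0 < y) : realDelta g k x = realDelta g k y := by
  suffices key : ∀ {x y : ℝ}, 0 < x → 0 < y → realDelta g k y ≤ realDelta g k x from
    le_antisymm (key hy hx) (key hx hy)
  intro x y hx hy
  have hbound : ∀ p : ℕ, 0 < p →
      realDelta g k y - realDelta g k x ≤ realDelta g k y / p := by
    intro p hp
    have hsub := realDelta_sub_le hdec hg hk (q := 2 * p) (by positivity) hx hy
    have hmul := mul_realDelta_lt hdec hk hp hy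
    rw [le_div_iff₀ (by positivity)]
    nlinarith
  have := ge_of_tendsto (tendsto_const_div_atTop_nhds_zero_nat (realDelta g k y))
    (eventually_atTop.2 ⟨1, hbound⟩)
  linarith

end Decreasing

theorem coe_toReal_apply {f : ℝ → EReal} (hf : StrictMonoOn f (Set.Ici 0)) {x : ℝ}
    (hx : 0 < x) : ((f x).toReal : EReal) = f x := by
  have hbot : f x ≠ ⊥ := ne_bot_of_gt (hf Set.self_mem_Ici hx.le hx)
  have htop : f x ≠ ⊤ :=
    ne_top_of_lt (hf hx.le (by linarith : (0 : ℝ) ≤ x + 1) (by linarith))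
  exact EReal.coe_toReal htop hbot

theorem Delta_eq_coe_realDelta {f : ℝ → EReal} (hf : StrictMonoOn f (Set.Ici 0)) {k : ℕ}
    (hk : 0 < k) {x : ℝ} (hx : 0 < x) :
    Delta f k x = (realDelta (fun x => (f x).toReal) k x : EReal) := by
  rw [realDelta, EReal.coe_sub, coe_toReal_apply hf (by positivity),
    coe_toReal_apply hf (by positivity), Delta]

theorem monotoneOn_toReal {f : ℝ → EReal} (hf : StrictMonoOn f (Set.Ici 0)) :
    MonotoneOn (fun x => (f x).toReal) (Set.Ioi 0) := by
  intro x hx y hy hxy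
  rw [← EReal.coe_le_coe_iff, coe_toReal_apply hf hx, coe_toReal_apply hf hy]
  exact hf.monotoneOn (Set.mem_Ici.2 (le_of_lt hx)) (Set.mem_Ici.2 (le_of_lt hy)) hxy

theorem cond1_implies_cond1a_general (f : ℝ → EReal)
    (hfmono : StrictMonoOn f (Set.Ici (0 : ℝ)))
    (hcond : Cond1 f) :
    Cond1a f := by
  have hdec : ∀ k : ℕ, 0 < k → ∀ a b : ℝ, 0 < a → 0 < b →
      realDelta (fun x => (f x).toReal) (k + 1) a < realDelta (fun x => (f x).toReal) k b := by
    intro k hk a b ha hb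
    have h := hcond k a b ha hb
    rwa [Delta_eq_coe_realDelta hfmono k.succ_pos ha, Delta_eq_coe_realDelta hfmono hk hb,
      EReal.coe_lt_coe_iff] at h
  intro k hk x y hx hy
  rw [Delta_eq_coe_realDelta hfmono hk hx, Delta_eq_coe_realDelta hfmono hk hy,
    realDelta_eq_of_pos hdec (monotoneOn_toReal hfmono) hk hx hy]

theorem cond1_implies_cond1a (f : ℝ → EReal)
    (hfmono : StrictMonoOn f (Set.Ici (0 : ℝ)))
    (hftop : ∀ x : ℝ, 0 ≤ x → f x ≠ ⊤)
    (hcond : Cond1 f) :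
    Cond1a f :=
  cond1_implies_cond1a_general f hfmono hcond

end FairDiv
end
end

section
/- Let f : ℝ≥0 → ℝ ∪ {−∞} be a strictly increasing function that is continuous on ℝ>0 and satisfies Condition 1a. Then there exist constants α ∈ ℝ>0 and β ∈ ℝ such that f(x) = α·log x + β for all x ∈ ℝ≥0 (in particular f(0) = −∞). -/
open scoped BigOperators

noncomputable section

namespace FairDiv

/-! Telescoping `Δ_{f,k}` over `k < n` shows that `f (n * x) - f x` does not depend on `x`; hence
`f (q * x) = f q + f x - f 1` for positive rationals `q`, and by continuity for all positive `q`.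
So `f - f 1` turns products into sums, `(f - f 1) ∘ exp` is a continuous additive map of `ℝ`,
hence linear. Finally `f 0 = ⊥` because `f 0 < f x = α * log x + β` for every `x > 0`. -/

open Set Real

theorem _root_.EReal.coe_toReal_of_strictMonoOn {α : Type*} [Preorder α] [NoMaxOrder α]
    {f : α → EReal} {a x : α} (hf : StrictMonoOn f (Ici a)) (hx : a < x) :
    ((f x).toReal : EReal) = f x := by
  obtain ⟨y, hxy⟩ := exists_gt x
  exact EReal.coe_toReal (hf hx.le (hx.trans hxy).le hxy).ne_top (hf le_rfl hx.le hx).ne_bot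

theorem Delta_eq_coe_sub {f : ℝ → EReal} {F : ℝ → ℝ}
    (hF : ∀ x : ℝ, 0 < x → (F x : EReal) = f x) {k : ℕ} (hk : 0 < k) {x : ℝ} (hx : 0 < x) :
    Delta f k x = ((F ((k + 1) * x) - F (k * x) : ℝ) : EReal) := by
  have hk' : (0 : ℝ) < k := by exact_mod_cast hk
  rw [Delta, EReal.coe_sub, hF _ (by positivity), hF _ (by positivity)]

section LogCharacterization

variable {F : ℝ → ℝ}

theorem map_natCast_mul_of_forall_sub_eq
    (hΔ : ∀ k : ℕ, 0 < k → ∀ x y : ℝ, 0 < x → 0 < y →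
      F ((k + 1) * x) - F (k * x) = F ((k + 1) * y) - F (k * y))
    {n : ℕ} (hn : 0 < n) {x : ℝ} (hx : 0 < x) : F (n * x) = F n + F x - F 1 := by
  induction n, hn using Nat.le_induction with
  | base => simp
  | succ n hn ih =>
    have hstep := hΔ n hn x 1 hx one_pos
    simp only [mul_one] at hstep ih
    push_cast
    linarith

theorem map_ratCast_mul_of_map_natCast_mul
    (hnat : ∀ n : ℕ, 0 < n → ∀ x : ℝ, 0 < x → F (n * x) = F n + F x - F 1)
    {q : ℚ} (hq : 0 < q) {x : ℝ} (hx : 0 < x) : F (q * x) = F q + F x - F 1 := by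
  obtain ⟨n, hn⟩ := Int.eq_ofNat_of_zero_le (Rat.num_pos.2 hq).le
  have hn0 : 0 < n := by have := Rat.num_pos.2 hq; omega
  have hm0 : (0 : ℝ) < q.den := by exact_mod_cast q.pos
  have hscale : ∀ y : ℝ, 0 < y → F (q * y) = F y + (F n - F q.den) := by
    intro y hy
    have hy' : 0 < y / q.den := div_pos hy hm0
    have hnum := hnat n hn0 _ hy'
    have hden := hnat q.den q.pos _ hy'
    rw [mul_div_cancel₀ _ hm0.ne'] at hden
    have hq' : (q : ℝ) * y = n * (y / q.den) := by
      rw [Rat.cast_def, hn]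
      push_cast
      ring
    rw [hq', hnum]
    linarith
  have h1 := hscale 1 one_pos
  rw [mul_one] at h1
  rw [hscale x hx]
  linarith

theorem map_mul_of_map_ratCast_mul (hcont : ContinuousOn F (Ioi 0))
    (hrat : ∀ q : ℚ, 0 < q → ∀ x : ℝ, 0 < x → F (q * x) = F q + F x - F 1)
    {x y : ℝ} (hx : 0 < x) (hy : 0 < y) : F (y * x) = F y + F x - F 1 := by
  have hEq : EqOn (fun y ↦ F (y * x)) (fun y ↦ F y + F x - F 1)
      (Ioi 0 ∩ range ((↑) : ℚ → ℝ)) := by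
    rintro _ ⟨hq, q, rfl⟩
    exact hrat q (by exact_mod_cast mem_Ioi.1 hq) x hx
  refine hEq.of_subset_closure ?_ ?_ inter_subset_left
    (Rat.denseRange_cast.open_subset_closure_inter isOpen_Ioi) hy
  · exact hcont.comp (continuousOn_id.mul continuousOn_const) fun y hy ↦ mul_pos hy hx
  · exact (hcont.add continuousOn_const).sub continuousOn_const

theorem eq_mul_log_of_map_mul (hcont : ContinuousOn F (Ioi 0))
    (hmul : ∀ x y : ℝ, 0 < x → 0 < y → F (x * y) = F x + F y) {x : ℝ} (hx : 0 < x) :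
    F x = F (exp 1) * log x := by
  let ψ : ℝ →+ ℝ := AddMonoidHom.mk' (F ∘ exp) fun s t ↦ by
    simp [exp_add, hmul _ _ (exp_pos s) (exp_pos t)]
  have hψ : Continuous ψ := hcont.comp_continuous continuous_exp exp_pos
  simpa [ψ, exp_log hx, mul_comm] using map_real_smul ψ hψ (log x) 1

theorem exists_eq_mul_log_add_of_forall_sub_eq (hmono : StrictMonoOn F (Ioi 0))
    (hcont : ContinuousOn F (Ioi 0))
    (hΔ : ∀ k : ℕ, 0 < k → ∀ x y : ℝ, 0 < x → 0 < y →
      F ((k + 1) * x) - F (k * x) = F ((k + 1) * y) - F (k * y)) :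
    ∃ α β : ℝ, 0 < α ∧ ∀ x : ℝ, 0 < x → F x = α * log x + β := by
  have hmul : ∀ x y : ℝ, 0 < x → 0 < y → F (x * y) = F x + F y - F 1 := fun x y hx hy ↦
    map_mul_of_map_ratCast_mul hcont (fun _ hq _ hx ↦ map_ratCast_mul_of_map_natCast_mul
      (fun _ hn _ hx ↦ map_natCast_mul_of_forall_sub_eq hΔ hn hx) hq hx) hy hx
  have hlog : ∀ x : ℝ, 0 < x → F x - F 1 = (F (exp 1) - F 1) * log x := fun x hx ↦
    eq_mul_log_of_map_mul (F := fun x ↦ F x - F 1) (hcont.sub continuousOn_const)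
      (fun x y hx hy ↦ by rw [hmul x y hx hy]; ring) hx
  refine ⟨F (exp 1) - F 1, F 1, ?_, fun x hx ↦ ?_⟩
  · linarith [hmono (mem_Ioi.2 one_pos) (mem_Ioi.2 (exp_pos 1)) (one_lt_exp_iff.2 one_pos)]
  · linarith [hlog x hx]

end LogCharacterization

theorem cond1a_implies_log_general (f : ℝ → EReal)
    (hfmono : StrictMonoOn f (Set.Ici (0 : ℝ)))
    (hfcont : ContinuousOn f (Set.Ioi (0 : ℝ)))
    (hcond : Cond1a f) :
    (∃ α β : ℝ, 0 < α ∧ f 0 = ⊥ ∧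
        ∀ x : ℝ, 0 < x → f x = ((α * Real.log x + β : ℝ) : EReal)) := by
  set F : ℝ → ℝ := fun x ↦ (f x).toReal
  have hF : ∀ x : ℝ, 0 < x → (F x : EReal) = f x := fun x hx ↦
    EReal.coe_toReal_of_strictMonoOn hfmono hx
  have hFmono : StrictMonoOn F (Ioi 0) := fun x hx y hy hxy ↦ by
    have := hfmono (Ioi_subset_Ici_self hx) (Ioi_subset_Ici_self hy) hxy
    rwa [← hF x hx, ← hF y hy, EReal.coe_lt_coe_iff] at this
  have hFcont : ContinuousOn F (Ioi 0) := by
    rw [EReal.isEmbedding_coe.isInducing.continuousOn_iff]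
    exact hfcont.congr fun x hx ↦ hF x hx
  have hΔ : ∀ k : ℕ, 0 < k → ∀ x y : ℝ, 0 < x → 0 < y →
      F ((k + 1) * x) - F (k * x) = F ((k + 1) * y) - F (k * y) := fun k hk x y hx hy ↦
    EReal.coe_eq_coe_iff.1 <| by
      rw [← Delta_eq_coe_sub hF hk hx, ← Delta_eq_coe_sub hF hk hy]
      exact hcond k hk x y hx hy
  obtain ⟨α, β, hα, hlog⟩ := exists_eq_mul_log_add_of_forall_sub_eq hFmono hFcont hΔ
  refine ⟨α, β, hα, (EReal.eq_bot_iff_forall_lt _).2 fun r ↦ ?_,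
    fun x hx ↦ by rw [← hF x hx, hlog x hx]⟩
  have hx : 0 < exp ((r - β) / α) := exp_pos _
  calc f 0 < f (exp ((r - β) / α)) := hfmono (mem_Ici.2 le_rfl) hx.le hx
    _ = r := by rw [← hF _ hx, hlog _ hx, log_exp, mul_div_cancel₀ _ hα.ne', sub_add_cancel]

theorem cond1a_implies_log (f : ℝ → EReal)
    (hfmono : StrictMonoOn f (Set.Ici (0 : ℝ)))
    (hftop : ∀ x : ℝ, 0 ≤ x → f x ≠ ⊤)
    (hfcont : ContinuousOn f (Set.Ioi (0 : ℝ)))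
    (hcond : Cond1a f) :
    (∃ α β : ℝ, 0 < α ∧ f 0 = ⊥ ∧
        ∀ x : ℝ, 0 < x → f x = ((α * Real.log x + β : ℝ) : EReal)) :=
  cond1a_implies_log_general f hfmono hfcont hcond

end FairDiv
end
end

section
/- Let f : ℝ≥0 → ℝ ∪ {−∞} be a strictly increasing function. Then the following are equivalent: (a) f satisfies Condition 3; (b) f satisfies Condition 3a; (c) f satisfies Condition 3b. -/
open scoped BigOperators

noncomputable section

namespace FairDiv

/-! Only 3b ⇒ 3 needs an argument, and only for `Δ_{k+1}(a) < Δ_k(b)` with `k ≥ 1`, `a, b ≥ 2`.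
Put `C = (k+1)a - 1` and `c = kb + 1`. The left side telescopes into the `a` unit increments of
`f` on `[C+1, C+a+1]`; by the second half of 3b each is below the corresponding increment of
step `c`, and these add up to `f((C+a)c) - f(Cc)`. Dually, the right side telescopes into the `b`
unit increments on `[kb, kb+b]`, each above the corresponding increment of step `C` by the
first half of 3b; those add up to `f((kb+b+1)C) - f((kb+1)C)`. As `Cc = (kb+1)C` and
`(C+a)c ≤ (kb+b+1)C` (equivalently `a + b ≤ ab`), monotonicity of `f` closes the chain. -/

lemma cond3a_of_cond3 {f : ℝ → EReal} (h : Cond3 f) : Cond3a f := by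
  intro k l hlk a b ha hb
  induction k, hlk using Nat.le_induction generalizing a with
  | base => exact h l a b ha hb
  | succ k _ ih => exact (h k a 1 ha one_pos).trans (ih 1 one_pos)

lemma cond3b_of_cond3 {f : ℝ → EReal} (h : Cond3 f) : Cond3b f := fun k a ha =>
  ⟨by simpa using h k a 1 ha one_pos, by simpa using h (k + 1) 1 a one_pos ha⟩

def natDelta (g : ℕ → ℝ) (k a : ℕ) : ℝ := g ((k + 1) * a) - g (k * a)

lemma sum_range_natDelta (g : ℕ → ℝ) (m n s : ℕ) :
    ∑ i ∈ Finset.range n, natDelta g (m + i) s = g ((m + n) * s) - g (m * s) := by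
  simpa [natDelta, add_assoc] using Finset.sum_range_sub (fun i => g ((m + i) * s)) n

lemma natDelta_succ_lt_natDelta {g : ℕ → ℝ} (hmono : MonotoneOn g (Set.Ici 1))
    (hunit_lt : ∀ j c, 0 < c → natDelta g (j + 2) 1 < natDelta g (j + 1) c)
    (hlt_unit : ∀ j c, 0 < c → natDelta g (j + 2) c < natDelta g (j + 1) 1)
    {k a b : ℕ} (ha : 2 ≤ a) (hb : 2 ≤ b) :
    natDelta g (k + 2) a < natDelta g (k + 1) b := by
  -- `D + 1` and `E + 1` are the `C` and `kb` of the sketch above, with `k + 1` in place of `k`.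
  obtain ⟨D, hD⟩ : ∃ D, (k + 2) * a = D + 2 :=
    ⟨_, (Nat.sub_add_cancel (by nlinarith : 2 ≤ (k + 2) * a)).symm⟩
  obtain ⟨E, hE⟩ : ∃ E, (k + 1) * b = E + 1 :=
    ⟨_, (Nat.sub_add_cancel (by nlinarith : 1 ≤ (k + 1) * b)).symm⟩
  have hmid : (D + 1 + a) * (E + 2) ≤ (E + 2 + b) * (D + 1) := by
    nlinarith [Nat.add_le_mul ha hb]
  calc natDelta g (k + 2) a = g ((D + 2 + a) * 1) - g ((D + 2) * 1) := by
        simp only [natDelta, mul_one, ← hD]; ring_nf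
    _ = ∑ i ∈ Finset.range a, natDelta g (D + 2 + i) 1 := (sum_range_natDelta g _ _ _).symm
    _ < ∑ i ∈ Finset.range a, natDelta g (D + 1 + i) (E + 2) := by
        refine Finset.sum_lt_sum_of_nonempty (Finset.nonempty_range_iff.2 (by omega)) fun i _ => ?_
        simpa only [add_right_comm] using hunit_lt (D + i) (E + 2) (by omega)
    _ = g ((D + 1 + a) * (E + 2)) - g ((D + 1) * (E + 2)) := sum_range_natDelta g _ _ _
    _ ≤ g ((E + 2 + b) * (D + 1)) - g ((E + 2) * (D + 1)) := by
        rw [mul_comm (D + 1)]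
        gcongr
        exact hmono (Set.mem_Ici.2 (by nlinarith)) (Set.mem_Ici.2 (by nlinarith)) hmid
    _ = ∑ i ∈ Finset.range b, natDelta g (E + 2 + i) (D + 1) := (sum_range_natDelta g _ _ _).symm
    _ < ∑ i ∈ Finset.range b, natDelta g (E + 1 + i) 1 := by
        refine Finset.sum_lt_sum_of_nonempty (Finset.nonempty_range_iff.2 (by omega)) fun i _ => ?_
        simpa only [add_right_comm] using hlt_unit (E + i) (D + 1) (by omega)
    _ = g ((E + 1 + b) * 1) - g ((E + 1) * 1) := sum_range_natDelta g _ _ _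
    _ = natDelta g (k + 1) b := by
        simp only [natDelta, mul_one, ← hE]; ring_nf

lemma Delta_natCast_eq_natDelta {f : ℝ → EReal} (hbot : ∀ x : ℝ, 0 < x → f x ≠ ⊥)
    (htop : ∀ x : ℝ, 0 < x → f x ≠ ⊤) {k a : ℕ} (hk : 0 < k) (ha : 0 < a) :
    Delta f k a = natDelta (fun n => (f n).toReal) k a := by
  have hfin (n : ℕ) (hn : 0 < n) : f n = (f n).toReal :=
    (EReal.coe_toReal (htop _ (Nat.cast_pos.2 hn)) (hbot _ (Nat.cast_pos.2 hn))).symm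
  have h1 : ((k : ℝ) + 1) * a = ((k + 1) * a : ℕ) := by push_cast; ring
  have h2 : (k : ℝ) * a = (k * a : ℕ) := by push_cast; ring
  rw [Delta, h1, h2, hfin _ (by positivity), hfin (k * a) (by positivity)]
  rfl

lemma cond3_of_cond3b {f : ℝ → EReal} (hfmono : StrictMonoOn f (Set.Ici 0))
    (hftop : ∀ x : ℝ, 0 ≤ x → f x ≠ ⊤) (h : Cond3b f) : Cond3 f := by
  have hbot (x : ℝ) (hx : 0 < x) : f x ≠ ⊥ :=
    ne_bot_of_gt (hfmono (Set.mem_Ici.2 le_rfl) (Set.mem_Ici.2 hx.le) hx)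
  set g : ℕ → ℝ := fun n => (f n).toReal
  have hΔ {k a : ℕ} (hk : 0 < k) (ha : 0 < a) : Delta f k a = natDelta g k a :=
    Delta_natCast_eq_natDelta hbot (fun x hx => hftop x hx.le) hk ha
  have hmono : MonotoneOn g (Set.Ici 1) := fun m hm n _ hmn =>
    EReal.toReal_le_toReal (hfmono.monotoneOn (Set.mem_Ici.2 m.cast_nonneg)
      (Set.mem_Ici.2 n.cast_nonneg) (Nat.cast_le.2 hmn)) (hbot _ (Nat.cast_pos.2 hm))
      (hftop _ n.cast_nonneg)
  have hunit_lt (j c : ℕ) (hc : 0 < c) : natDelta g (j + 2) 1 < natDelta g (j + 1) c := by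
    have := (h j c hc).2
    rwa [← Nat.cast_one (R := ℝ), hΔ (by omega) one_pos, hΔ (by omega) hc,
      EReal.coe_lt_coe_iff] at this
  have hlt_unit (j c : ℕ) (hc : 0 < c) : natDelta g (j + 2) c < natDelta g (j + 1) 1 := by
    have := (h (j + 1) c hc).1
    rwa [← Nat.cast_one (R := ℝ), hΔ (by omega) one_pos, hΔ (by omega) hc,
      EReal.coe_lt_coe_iff] at this
  intro k a b ha hb
  rcases k with _ | k
  · calc Delta f (0 + 1) a < Delta f 0 1 := (h 0 a ha).1
      _ ≤ Delta f 0 b := by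
        simp only [Delta, CharP.cast_eq_zero, zero_add, one_mul, zero_mul]
        exact EReal.sub_le_sub (hfmono.monotoneOn (Set.mem_Ici.2 zero_le_one)
          (Set.mem_Ici.2 b.cast_nonneg) (Nat.one_le_cast.2 hb)) le_rfl
  rcases (show a = 1 ∨ 2 ≤ a by omega) with rfl | ha2
  · simpa using (h k b hb).2
  rcases (show b = 1 ∨ 2 ≤ b by omega) with rfl | hb2
  · simpa using (h (k + 1) a ha).1
  rw [hΔ (by omega) ha, hΔ (by omega) hb, EReal.coe_lt_coe_iff]
  exact natDelta_succ_lt_natDelta hmono hunit_lt hlt_unit ha2 hb2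

theorem cond3_eqv (f : ℝ → EReal)
    (hfmono : StrictMonoOn f (Set.Ici (0 : ℝ)))
    (hftop : ∀ x : ℝ, 0 ≤ x → f x ≠ ⊤) :
    (Cond3 f ↔ Cond3a f) ∧ (Cond3 f ↔ Cond3b f) :=
  ⟨⟨cond3a_of_cond3, fun h k a b => h (k + 1) k k.lt_succ_self a b⟩,
    ⟨cond3b_of_cond3, cond3_of_cond3b hfmono hftop⟩⟩

end FairDiv
end
end

section
/- For c ∈ ℝ≥0, the modified logarithmic function λ_c satisfies Condition 3b if and only if 0 ≤ c ≤ 1. -/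
open scoped BigOperators

noncomputable section

namespace FairDiv

/-!
Where every argument of the logarithm is positive, `Δ_{λ_c,k}(x) = log (1 + x / (k x + c))`, so
comparing increments amounts to comparing the fractions `x / (k x + c)`. The left inequality of
Condition 3b then reads `c (a - 1) < a`, which holds for every integer `a ≥ 1` exactly when
`c ≤ 1`, and the right one reads `c < a (1 + c)`, which always holds. The only infinite increment
is `Δ_{λ_0,0}(1) = +∞`.
-/

lemma lam_of_pos {c x : ℝ} (h : 0 < x + c) : lam c x = (Real.log (x + c) : EReal) := by
  simp [lam, h.ne']

lemma delta_lam_of_pos {c x : ℝ} {k : ℕ} (hx : 0 < x) (h : 0 < k * x + c) :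
    Delta (lam c) k x = (Real.log (1 + x / (k * x + c)) : EReal) := by
  have h' : 0 < ((k : ℝ) + 1) * x + c := by linarith
  rw [Delta, lam_of_pos h', lam_of_pos h, ← EReal.coe_sub, ← Real.log_div h'.ne' h.ne']
  congr 2
  field_simp
  ring

lemma delta_lam_lt_delta_lam_iff {c x y : ℝ} {k l : ℕ} (hx : 0 < x) (hy : 0 < y)
    (hkx : 0 < k * x + c) (hly : 0 < l * y + c) :
    Delta (lam c) k x < Delta (lam c) l y ↔ x / (k * x + c) < y / (l * y + c) := by
  rw [delta_lam_of_pos hx hkx, delta_lam_of_pos hy hly, EReal.coe_lt_coe_iff,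
    Real.log_lt_log_iff (by positivity) (by positivity), add_lt_add_iff_left]

lemma delta_lam_zero_zero_one : Delta (lam 0) 0 1 = ⊤ := by
  simp [Delta, lam]

lemma delta_lam_succ_lt_delta_lam_one_iff {c a : ℝ} (hc : 0 ≤ c) (ha : 0 < a) (k : ℕ) :
    Delta (lam c) (k + 1) a < Delta (lam c) k 1 ↔ c * (a - 1) < a := by
  have hk : (0 : ℝ) ≤ k := k.cast_nonneg
  have hka : 0 < ((k + 1 : ℕ) : ℝ) * a + c := by push_cast; nlinarith
  rcases (add_nonneg hk hc).eq_or_lt with hkc | hkc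
  · have hk0 : (k : ℝ) = 0 := by linarith
    obtain ⟨rfl, rfl⟩ : k = 0 ∧ c = 0 := ⟨by exact_mod_cast hk0, by linarith⟩
    rw [delta_lam_zero_zero_one, delta_lam_of_pos ha hka]
    simpa using ha
  · rw [delta_lam_lt_delta_lam_iff ha one_pos hka (by simpa using hkc),
      div_lt_div_iff₀ hka (by simpa using hkc)]
    push_cast
    constructor <;> intro h <;> linarith

lemma delta_lam_add_two_one_lt {c a : ℝ} (hc : 0 ≤ c) (ha : 1 ≤ a) (k : ℕ) :
    Delta (lam c) (k + 2) 1 < Delta (lam c) (k + 1) a := by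
  have hk : (0 : ℝ) ≤ k := k.cast_nonneg
  have hka : 0 < ((k + 1 : ℕ) : ℝ) * a + c := by push_cast; nlinarith
  have hk1 : 0 < ((k + 2 : ℕ) : ℝ) * 1 + c := by push_cast; linarith
  rw [delta_lam_lt_delta_lam_iff one_pos (by linarith) hk1 hka, div_lt_div_iff₀ hk1 hka]
  push_cast
  nlinarith

lemma forall_nat_mul_sub_one_lt_iff {c : ℝ} :
    (∀ n : ℕ, 0 < n → c * (n - 1) < n) ↔ c ≤ 1 := by
  constructor
  · intro h
    by_contra! hc
    obtain ⟨n, hn⟩ := exists_nat_gt (c / (c - 1))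
    have hn' : c < n * (c - 1) := (div_lt_iff₀ (by linarith)).mp hn
    have hlt := h n (by exact_mod_cast (div_pos (by linarith) (by linarith)).trans hn)
    linarith
  · intro hc n hn
    have : (1 : ℝ) ≤ n := by exact_mod_cast hn
    nlinarith

theorem lam_cond3b (c : ℝ) (hc : 0 ≤ c) :
    Cond3b (lam c) ↔ (0 ≤ c ∧ c ≤ 1) := by
  constructor
  · intro h
    refine ⟨hc, forall_nat_mul_sub_one_lt_iff.mp fun a ha => ?_⟩
    exact (delta_lam_succ_lt_delta_lam_one_iff hc (by exact_mod_cast ha) 0).mp (h 0 a ha).1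
  · rintro ⟨-, hc1⟩ k a ha
    exact ⟨(delta_lam_succ_lt_delta_lam_one_iff hc (by exact_mod_cast ha) k).mpr
        (forall_nat_mul_sub_one_lt_iff.mpr hc1 a ha),
      delta_lam_add_two_one_lt hc (by exact_mod_cast ha) k⟩

end FairDiv
end
end

section
/- For c ≥ −1, the modified harmonic function h_c satisfies Condition 3b if and only if −1 ≤ c ≤ 1/log 2 − 1 (≈ 0.443). -/
open scoped BigOperators

noncomputable section

namespace FairDiv

/-!
Every difference in Condition 3b is a sum of terms `1 / (t + 1 + c)`: the unit steps are single
terms, the block `h_c((k+2)a) - h_c((k+1)a)` is a sum of `a` consecutive ones (for `c = -1` only the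
step from `h_{-1}(0) = -∞` is special, and it is `+∞`). Bounding a block by `a` copies of its last
term gives the right inequality, and by `a` copies of its first term the left one when `c ≤ 0`.
For `c > 0`, the convexity bound `1 / u < log (u + 1/2) - log (u - 1/2)` bounds the block by
`log (((k+2)a + c + 1/2) / ((k+1)a + c + 1/2)) ≤ log ((k+2)/(k+1))`, and `log (1 + 1/n) ≤ 1/(n + c)`
for all `n ≥ 1` as soon as it holds for `n = 1`, i.e. `c ≤ 1/log 2 - 1` (for `n ≥ 2` the series of
`log ((1+y)/(1-y))`, `y = 1/(2n+1)`, cut after two terms suffices, since then `c < 9/20`). Conversely, the block with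
`k = 0` tends to `log 2` as `a → ∞` while staying below `1/(1+c)`.
-/

open Finset Real Filter Topology

lemma log_add_one_sub_log_le {v : ℝ} (hv : 0 < v) : log (v + 1) - log v ≤ 1 / v := by
  have h := log_le_sub_one_of_pos (div_pos (by linarith : 0 < v + 1) hv)
  rw [log_div (by linarith) hv.ne'] at h
  calc log (v + 1) - log v ≤ (v + 1) / v - 1 := h
    _ = 1 / v := by field_simp; ring

lemma one_div_lt_log_add_half_sub_log_sub_half {u : ℝ} (hu : 1 / 2 < u) :
    1 / u < log (u + 1 / 2) - log (u - 1 / 2) := by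
  obtain ⟨x, hx⟩ : ∃ x : ℝ, x = 1 / (2 * u) := ⟨_, rfl⟩
  have hx0 : 0 < x := by rw [hx]; positivity
  have hx1 : x < 1 := by rw [hx, div_lt_one (by positivity)]; linarith
  have h := sum_range_le_log_div hx0.le hx1 2
  have hdiv : (1 + x) / (1 - x) = (u + 1 / 2) / (u - 1 / 2) := by
    rw [hx]; field_simp
  rw [hdiv, log_div (by linarith) (by linarith)] at h
  norm_num [sum_range_succ] at h
  have hux : 1 / u = 2 * x := by rw [hx]; field_simp
  nlinarith [pow_pos hx0 3]

lemma log_add_one_sub_log_le_of_two_le {n c : ℝ} (hn : 2 ≤ n) (hc : c ≤ 9 / 20)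
    (hnc : 0 < n + c) : log (n + 1) - log n ≤ 1 / (n + c) := by
  obtain ⟨y, hy⟩ : ∃ y : ℝ, y = 1 / (2 * n + 1) := ⟨_, rfl⟩
  have hy0 : 0 < y := by rw [hy]; positivity
  have hy5 : y ≤ 1 / 5 := by
    rw [hy, div_le_div_iff₀ (by positivity) (by norm_num)]; linarith
  have h := log_div_le_sum_range_add hy0.le (by linarith) 2
  have hdiv : (1 + y) / (1 - y) = (n + 1) / n := by
    rw [hy]; field_simp; ring
  rw [hdiv, log_div (by linarith) (by linarith)] at h
  norm_num [sum_range_succ] at h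
  have htail : y ^ 5 / (1 - y ^ 2) ≤ 25 / 24 * y ^ 5 := by
    rw [div_le_iff₀ (by nlinarith)]
    nlinarith [mul_nonneg (pow_pos hy0 5).le (by nlinarith : (0 : ℝ) ≤ 1 / 25 - y ^ 2)]
  have hhead : y + y ^ 2 / 10 ≤ 10 / (20 * n + 9) := by
    have hyn : y * (2 * n + 1) = 1 := by rw [hy]; field_simp
    rw [le_div_iff₀ (by linarith)]
    nlinarith [congrArg (· * y) hyn]
  have hcubic : y ^ 3 / 3 + 25 / 24 * y ^ 5 ≤ y ^ 2 / 10 := by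
    nlinarith [pow_pos hy0 2, pow_pos hy0 3, pow_pos hy0 4, mul_pos hy0 hy0]
  have hmono : 20 / (20 * n + 9) ≤ 1 / (n + c) := by
    rw [div_le_div_iff₀ (by linarith) hnc]; linarith
  have htwice : 20 / (20 * n + 9) = 2 * (10 / (20 * n + 9)) := by ring
  linarith

lemma one_div_log_two_sub_one_lt : 1 / log 2 - 1 < 9 / 20 := by
  have h := log_two_gt_d9
  rw [sub_lt_iff_lt_add, div_lt_iff₀ (by linarith)]
  norm_num at h ⊢
  linarith

variable {c : ℝ} {m n : ℕ}

lemma sum_Ico_add_le (hm : 0 < (m : ℝ) + 1 + c) :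
    ∑ t ∈ Ico m (m + n), 1 / ((t : ℝ) + 1 + c) ≤ n / ((m : ℝ) + 1 + c) := by
  have h := sum_le_card_nsmul (Ico m (m + n)) (fun t => 1 / ((t : ℝ) + 1 + c))
    (1 / ((m : ℝ) + 1 + c)) fun t ht => by
      have : (m : ℝ) ≤ t := by exact_mod_cast (mem_Ico.1 ht).1
      gcongr
  simpa [div_eq_mul_one_div (n : ℝ)] using h

lemma div_le_sum_Ico_add (hm : 0 < (m : ℝ) + 1 + c) :
    n / ((m : ℝ) + n + c) ≤ ∑ t ∈ Ico m (m + n), 1 / ((t : ℝ) + 1 + c) := by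
  have h := card_nsmul_le_sum (Ico m (m + n)) (fun t => 1 / ((t : ℝ) + 1 + c))
    (1 / ((m : ℝ) + n + c)) fun t ht => by
      have h1 : (m : ℝ) ≤ t := by exact_mod_cast (mem_Ico.1 ht).1
      have h2 : (t : ℝ) + 1 ≤ m + n := by exact_mod_cast (mem_Ico.1 ht).2
      exact one_div_le_one_div_of_le (by linarith) (by linarith)
  simpa [div_eq_mul_one_div (n : ℝ)] using h

lemma log_sub_log_le_sum_Ico (hm : 0 < (m : ℝ) + 1 + c) (hmn : m ≤ n) :
    log ((n : ℝ) + 1 + c) - log ((m : ℝ) + 1 + c) ≤ ∑ t ∈ Ico m n, 1 / ((t : ℝ) + 1 + c) := by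
  rw [← sum_Ico_sub (fun t : ℕ => log ((t : ℝ) + 1 + c)) hmn]
  refine sum_le_sum fun t ht => ?_
  have : (m : ℝ) ≤ t := by exact_mod_cast (mem_Ico.1 ht).1
  have h := log_add_one_sub_log_le (v := (t : ℝ) + 1 + c) (by linarith)
  push_cast
  rwa [add_right_comm _ 1 c]

lemma sum_Ico_lt_log_sub_log (hm : 0 < (m : ℝ) + c + 1 / 2) (hmn : m < n) :
    ∑ t ∈ Ico m n, 1 / ((t : ℝ) + 1 + c) <
      log ((n : ℝ) + c + 1 / 2) - log ((m : ℝ) + c + 1 / 2) := by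
  rw [← sum_Ico_sub (fun t : ℕ => log ((t : ℝ) + c + 1 / 2)) hmn.le]
  refine sum_lt_sum_of_nonempty (nonempty_Ico.2 hmn) fun t ht => ?_
  have : (m : ℝ) ≤ t := by exact_mod_cast (mem_Ico.1 ht).1
  have h := one_div_lt_log_add_half_sub_log_sub_half (u := (t : ℝ) + 1 + c) (by linarith)
  rw [show (t : ℝ) + 1 + c - 1 / 2 = t + c + 1 / 2 by ring] at h
  push_cast
  exact h

lemma log_mul_add_sub_log_mul_add_le {x y s d : ℝ} (hx : 0 < x) (hxy : x ≤ y) (hs : 0 < s)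
    (hd : 0 ≤ d) : log (y * s + d) - log (x * s + d) ≤ log y - log x := by
  have hy : 0 < y := hx.trans_le hxy
  rw [← log_div (by positivity) (by positivity), ← log_div hy.ne' hx.ne']
  apply log_le_log (by positivity)
  rw [div_le_div_iff₀ (by positivity) hx]
  nlinarith

lemma log_add_one_sub_log_le_one_div_add (hn : 1 ≤ n) (hc : -1 < c)
    (hγ : c ≤ 1 / log 2 - 1) : log ((n : ℝ) + 1) - log n ≤ 1 / (n + c) := by
  rcases hn.eq_or_lt with rfl | hn2
  · have hlog2 := log_pos one_lt_two
    rw [le_div_iff₀ (by norm_num; linarith)]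
    rw [le_sub_iff_add_le, le_div_iff₀ hlog2] at hγ
    norm_num
    linarith
  · have hn1 : (1 : ℝ) ≤ n := by exact_mod_cast hn
    exact log_add_one_sub_log_le_of_two_le (by exact_mod_cast hn2)
      (hγ.trans one_div_log_two_sub_one_lt.le) (by linarith)

variable {k a : ℕ}

lemma sum_Ico_mul_lt_one_div (hγ : c ≤ 1 / log 2 - 1) (hk : 0 < (k : ℝ) + 1 + c)
    (ha : 0 < a) :
    ∑ t ∈ Ico ((k + 1) * a) ((k + 2) * a), 1 / ((t : ℝ) + 1 + c) < 1 / ((k : ℝ) + 1 + c) := by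
  have ha1 : (1 : ℝ) ≤ a := by exact_mod_cast ha
  have hk0 : (0 : ℝ) ≤ k := k.cast_nonneg
  rcases le_or_gt c 0 with hc0 | hc0
  · rw [show (k + 2) * a = (k + 1) * a + a by ring]
    calc _ ≤ (a : ℝ) / (((k + 1) * a : ℕ) + 1 + c) := sum_Ico_add_le (by push_cast; nlinarith)
      _ < 1 / ((k : ℝ) + 1 + c) := by
        push_cast
        rw [div_lt_div_iff₀ (by nlinarith) hk]
        nlinarith
  · calc _ < log (((k + 2) * a : ℕ) + c + 1 / 2) - log (((k + 1) * a : ℕ) + c + 1 / 2) :=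
          sum_Ico_lt_log_sub_log (by push_cast; positivity)
            (Nat.mul_lt_mul_of_pos_right (by omega) ha)
      _ ≤ log ((k : ℝ) + 2) - log ((k : ℝ) + 1) := by
          push_cast
          simpa only [add_assoc] using log_mul_add_sub_log_mul_add_le (x := (k : ℝ) + 1)
            (y := (k : ℝ) + 2) (s := a) (d := c + 1 / 2) (by positivity) (by linarith)
            (by positivity) (by positivity)
      _ ≤ 1 / ((k : ℝ) + 1 + c) := by
          have h := log_add_one_sub_log_le_one_div_add (n := k + 1) (by omega) (by linarith) hγ
          push_cast at h
          rwa [add_assoc (k : ℝ) 1 1, one_add_one_eq_two] at h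

lemma one_div_lt_sum_Ico_mul (hc : -1 ≤ c) (ha : 0 < a) :
    1 / ((k : ℝ) + 3 + c) < ∑ t ∈ Ico ((k + 1) * a) ((k + 2) * a), 1 / ((t : ℝ) + 1 + c) := by
  have ha1 : (1 : ℝ) ≤ a := by exact_mod_cast ha
  have hk0 : (0 : ℝ) ≤ k := k.cast_nonneg
  rw [show (k + 2) * a = (k + 1) * a + a by ring]
  calc 1 / ((k : ℝ) + 3 + c) < (a : ℝ) / (((k + 1) * a : ℕ) + a + c) := by
        push_cast
        rw [div_lt_div_iff₀ (by linarith) (by nlinarith)]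
        nlinarith
    _ ≤ _ := div_le_sum_Ico_add (by push_cast; nlinarith)

lemma log_two_le_of_sum_lt (hc : -1 < c)
    (h : ∀ a : ℕ, 0 < a → ∑ t ∈ Ico a (2 * a), 1 / ((t : ℝ) + 1 + c) < 1 / (1 + c)) :
    log 2 ≤ 1 / (1 + c) := by
  have hlim : Tendsto (fun a : ℕ => log (1 + a / (a + (1 + c)))) atTop (𝓝 (log 2)) := by
    have := ((tendsto_natCast_div_add_atTop (1 + c)).const_add 1).log (by norm_num)
    norm_num at this
    exact this
  refine le_of_tendsto hlim (eventually_atTop.2 ⟨1, fun a ha => ?_⟩)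
  have ha' : (1 : ℝ) ≤ a := by exact_mod_cast ha
  have hsum := log_sub_log_le_sum_Ico (c := c) (m := a) (n := 2 * a) (by linarith) (by omega)
  have hratio :
      log (1 + a / (a + (1 + c))) = log (((2 * a : ℕ) : ℝ) + 1 + c) - log (a + 1 + c) := by
    have hne : (a : ℝ) + (1 + c) ≠ 0 := by linarith
    rw [← log_div (by push_cast; linarith) (by linarith), one_add_div hne]
    push_cast
    ring_nf
  exact (hratio ▸ hsum).trans (h a ha).le

lemma hmod_eq_sum (h : c ≠ -1 ∨ n ≠ 0) :
    hmod c n = ((∑ t ∈ range n, 1 / ((t : ℝ) + 1 + c) : ℝ) : EReal) := by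
  unfold hmod
  split_ifs with hc hn
  · exact absurd hn (h.resolve_left (not_not.2 hc))
  · obtain ⟨n, rfl⟩ := Nat.exists_eq_succ_of_ne_zero hn
    subst hc
    -- for `c = -1` the `t = 0` term is `1 / 0 = 0`, which shifts the sum to `∑_{t < n-1} 1/(t+1)`
    simp [sum_range_succ']
  · rfl

lemma hmod_sub_hmod (h : c ≠ -1 ∨ m ≠ 0) (hmn : m ≤ n) :
    hmod c n - hmod c m = ((∑ t ∈ Ico m n, 1 / ((t : ℝ) + 1 + c) : ℝ) : EReal) := by
  rw [hmod_eq_sum h, hmod_eq_sum (h.imp_right fun hm => by omega), ← EReal.coe_sub,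
    sum_Ico_eq_sub _ hmn]

lemma hmod_succ_sub_hmod (h : c ≠ -1 ∨ n ≠ 0) :
    hmod c (n + 1) - hmod c n = ((1 / ((n : ℝ) + 1 + c) : ℝ) : EReal) := by
  rw [hmod_sub_hmod h n.le_succ, Nat.Ico_succ_singleton, sum_singleton]

lemma hmod_mul_sub_hmod_mul (ha : 0 < a) :
    hmod c ((k + 2) * a) - hmod c ((k + 1) * a) =
      ((∑ t ∈ Ico ((k + 1) * a) ((k + 2) * a), 1 / ((t : ℝ) + 1 + c) : ℝ) : EReal) :=
  hmod_sub_hmod (Or.inr (by positivity)) (by gcongr; omega)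

lemma le_one_div_log_two_sub_one_of_cond3bNat (hc : -1 ≤ c) (H : Cond3bNat (hmod c)) :
    c ≤ 1 / log 2 - 1 := by
  rcases hc.eq_or_lt with rfl | hc'
  · linarith [one_div_pos.2 (log_pos one_lt_two)]
  have h2 := log_two_le_of_sum_lt hc' fun a ha => by
    have h := (H 0 a ha).1
    rw [hmod_mul_sub_hmod_mul ha, hmod_succ_sub_hmod (Or.inl hc'.ne'),
      EReal.coe_lt_coe_iff] at h
    simpa using h
  rw [le_div_iff₀ (by linarith)] at h2
  rw [le_sub_iff_add_le, le_div_iff₀ (log_pos one_lt_two)]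
  linarith

lemma cond3bNat_hmod (hc : -1 ≤ c) (hγ : c ≤ 1 / log 2 - 1) : Cond3bNat (hmod c) := by
  intro k a ha
  rw [hmod_mul_sub_hmod_mul ha]
  refine ⟨?_, ?_⟩
  · by_cases hk : c = -1 ∧ k = 0
    · obtain ⟨rfl, rfl⟩ := hk
      simp [hmod]
    have hk' : 0 < (k : ℝ) + 1 + c := by
      rcases not_and_or.1 hk with hc' | hk'
      · linarith [lt_of_le_of_ne hc (Ne.symm hc'), k.cast_nonneg (α := ℝ)]
      · linarith [show (1 : ℝ) ≤ k by exact_mod_cast Nat.one_le_iff_ne_zero.2 hk']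
    rw [hmod_succ_sub_hmod (not_and_or.1 hk), EReal.coe_lt_coe_iff]
    exact sum_Ico_mul_lt_one_div hγ hk' ha
  · rw [hmod_succ_sub_hmod (Or.inr (by omega)), EReal.coe_lt_coe_iff]
    convert one_div_lt_sum_Ico_mul hc ha using 2
    push_cast
    ring

theorem hmod_cond3b (c : ℝ) (hc : -1 ≤ c) :
    Cond3bNat (hmod c) ↔ (-1 ≤ c ∧ c ≤ 1 / Real.log 2 - 1) :=
  ⟨fun H => ⟨hc, le_one_div_log_two_sub_one_of_cond3bNat hc H⟩,
    fun h => cond3bNat_hmod hc h.2⟩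

end FairDiv
end
end

section
/- For p ∈ ℝ, the p-mean function φ_p satisfies Condition 4 if and only if p < 1. -/
open scoped BigOperators

noncomputable section

/-! On `(0, ∞)` the real function underlying `φ_p` (`x ^ p`, `log x` or `-x ^ p`) is strictly
concave exactly when `p < 1`, and Condition 4 is midpoint concavity at the integers
`k, k + 1, k + 2`. For `0 < p < 1` concavity holds on all of `[0, ∞)`; for `p ≤ 0` the value
`φ_p(0) = −∞` makes `Δ_{φ_p,0}(1) = +∞`, so `k = 0` holds trivially. For `p ≥ 1`, `k = 0` fails
since `2 ^ p − 1 ≥ 1 = φ_p(1) − φ_p(0)`. -/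

open Set Real

lemma strictConvexOn_rpow_of_neg {p : ℝ} (hp : p < 0) :
    StrictConvexOn ℝ (Ioi 0) fun x : ℝ ↦ x ^ p := by
  refine StrictMonoOn.strictConvexOn_of_deriv (convex_Ioi 0)
    (fun x hx ↦ (continuousAt_rpow_const x p (Or.inl hx.ne')).continuousWithinAt) ?_
  rw [interior_Ioi, deriv_rpow_const']
  intro x hx y _ hxy
  exact mul_lt_mul_of_neg_left (rpow_lt_rpow_of_neg hx hxy (by linarith)) hp

lemma StrictConcaveOn.sub_lt_sub_of_add_two {f : ℝ → ℝ} {s : Set ℝ}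
    (hf : StrictConcaveOn ℝ s f) {x : ℝ} (hx : x ∈ s) (hx₂ : x + 2 ∈ s) :
    f (x + 2) - f (x + 1) < f (x + 1) - f x := by
  have h := hf.slope_anti_adjacent hx hx₂ (lt_add_one x) (by linarith)
  rwa [show x + 2 - (x + 1) = 1 by ring, add_sub_cancel_left, div_one, div_one] at h

namespace FairDiv

lemma delta_succ_one_lt_of_strictConcaveOn {f : ℝ → EReal} {g : ℝ → ℝ} {s : Set ℝ}
    (hg : StrictConcaveOn ℝ s g) (hfg : ∀ x ∈ s, f x = g x) {k : ℕ}
    (hk : (k : ℝ) ∈ s) (hk₂ : (k : ℝ) + 2 ∈ s) :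
    Delta f (k + 1) 1 < Delta f k 1 := by
  have hk₁ : (k : ℝ) + 1 ∈ s := hg.1.ordConnected.out hk hk₂ ⟨by linarith, by linarith⟩
  simp only [Delta, mul_one]
  push_cast
  rw [hfg _ hk, hfg _ hk₁, add_assoc, one_add_one_eq_two, hfg _ hk₂, ← EReal.coe_sub,
    ← EReal.coe_sub, EReal.coe_lt_coe_iff]
  exact hg.sub_lt_sub_of_add_two hk hk₂

lemma cond4_of_strictConcaveOn_Ici {f : ℝ → EReal} {g : ℝ → ℝ}
    (hg : StrictConcaveOn ℝ (Ici 0) g) (hfg : ∀ x ∈ Ici (0 : ℝ), f x = g x) : Cond4 f :=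
  fun k ↦ delta_succ_one_lt_of_strictConcaveOn hg hfg (mem_Ici.2 k.cast_nonneg)
    (mem_Ici.2 (by positivity))

lemma cond4_of_strictConcaveOn_Ioi {f : ℝ → EReal} {g : ℝ → ℝ}
    (hg : StrictConcaveOn ℝ (Ioi 0) g) (hfg : ∀ x ∈ Ioi (0 : ℝ), f x = g x) (h₀ : f 0 = ⊥) :
    Cond4 f := by
  rintro (_ | k)
  · have h₁ : f 1 = g 1 := hfg 1 (mem_Ioi.2 one_pos)
    have h₂ : f 2 = g 2 := hfg 2 (mem_Ioi.2 two_pos)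
    have hΔ₀ : Delta f 0 1 = ⊤ := by simp [Delta, h₀, h₁]
    have hΔ₁ : Delta f 1 1 = ↑(g 2 - g 1) := by norm_num [Delta, h₁, h₂, EReal.coe_sub]
    rw [hΔ₀, hΔ₁]
    exact EReal.coe_lt_top _
  · exact delta_succ_one_lt_of_strictConcaveOn hg hfg (mem_Ioi.2 (by positivity))
      (mem_Ioi.2 (by positivity))

lemma phi_of_pos {p : ℝ} (hp : 0 < p) (x : ℝ) : phi p x = ↑(x ^ p) := if_pos hp

lemma phi_apply_zero {p : ℝ} (hp : p ≤ 0) : phi p 0 = ⊥ := by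
  simp [phi, hp.not_gt]

lemma phi_zero_apply {x : ℝ} (hx : 0 < x) : phi 0 x = ↑(log x) := by
  simp [phi, hx.ne']

lemma phi_of_neg {p x : ℝ} (hp : p < 0) (hx : 0 < x) : phi p x = ↑(-x ^ p) := by
  simp [phi, hp.not_gt, hx.ne', hp.ne]

lemma not_cond4_phi_of_one_le {p : ℝ} (hp : 1 ≤ p) : ¬ Cond4 (phi p) := by
  intro h
  have h₀ := h 0
  have hp₀ : 0 < p := by linarith
  have h₂ : (2 : ℝ) ≤ 2 ^ p := by
    simpa using rpow_le_rpow_of_exponent_le one_le_two hp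
  simp only [Delta, phi_of_pos hp₀] at h₀
  rw [← EReal.coe_sub, ← EReal.coe_sub, EReal.coe_lt_coe_iff] at h₀
  norm_num [zero_rpow hp₀.ne'] at h₀
  linarith

theorem phi_cond4 (p : ℝ) :
    Cond4 (phi p) ↔ p < 1 := by
  refine ⟨fun h ↦ ?_, fun hp ↦ ?_⟩
  · by_contra! hp
    exact not_cond4_phi_of_one_le hp h
  rcases lt_trichotomy p 0 with hneg | rfl | hpos
  · exact cond4_of_strictConcaveOn_Ioi (strictConvexOn_rpow_of_neg hneg).neg
      (fun x hx ↦ phi_of_neg hneg hx) (phi_apply_zero hneg.le)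
  · exact cond4_of_strictConcaveOn_Ioi strictConcaveOn_log_Ioi (fun x hx ↦ phi_zero_apply hx)
      (phi_apply_zero le_rfl)
  · exact cond4_of_strictConcaveOn_Ici (strictConcaveOn_rpow hpos hp)
      (fun x _ ↦ phi_of_pos hpos x)

end FairDiv
end
end

section
/- Let f : ℝ≥0 → ℝ ∪ {−∞} be a strictly increasing function. If f satisfies Condition 6a, then it satisfies Condition 5. -/
open scoped BigOperators

noncomputable section

namespace FairDiv

/-!
Condition 6a with `a = b = 1` says that the unit increments `f (n + 1) - f n` strictly decrease
along `ℕ`, so the increment of `f` over a window of fixed width decreases as the window moves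
right (a window starting at a point where `f = ⊥` has increment `⊤`). Condition 6a for
`(k + 1, a, b)` bounds `Δ_{f,k+1}(a)` strictly by the `b`-window at `(k + 1) b - 1`, which lies
to the right of every `ℓ b + r a < (k + 1) b`; for `(k + 2, 1, a)` it bounds `Δ_{f,k+2}(1)` by
the `a`-window at `(k + 2) a - 1`, to the right of the `a`-window at `(k + 1) a`, whose increment
is `Δ_{f,k+1}(a)`.
-/

lemma add_sub_le_add_sub_of_antitoneOn_succ_sub {g : ℕ → ℝ} {m : ℕ}
    (hg : AntitoneOn (fun n => g (n + 1) - g n) (Set.Ici m)) {n : ℕ} (hmn : m ≤ n) (w : ℕ) :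
    g (n + w) - g n ≤ g (m + w) - g m := by
  have telescope (p : ℕ) :
      g (p + w) - g p = ∑ i ∈ Finset.range w, (g (p + (i + 1)) - g (p + i)) := by
    simpa using (Finset.sum_range_sub (fun i => g (p + i)) w).symm
  rw [telescope, telescope]
  exact Finset.sum_le_sum fun i _ =>
    hg (Nat.le_add_right m i) (hmn.trans (Nat.le_add_right n i)) (Nat.add_le_add_right hmn i)

section
variable {f : ℝ → EReal}

lemma ne_top_of_strictMonoOn_Ici (hf : StrictMonoOn f (Set.Ici 0)) {x : ℝ} (hx : 0 ≤ x) :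
    f x ≠ ⊤ :=
  (hf hx (Set.mem_Ici.2 (by linarith)) (lt_add_one x)).ne_top

lemma ne_bot_of_strictMonoOn_Ici (hf : StrictMonoOn f (Set.Ici 0)) {x : ℝ} (hx : 0 < x) :
    f x ≠ ⊥ :=
  (hf Set.self_mem_Ici hx.le hx).ne_bot

lemma Cond6a.succ_sub_lt (hcond : Cond6a f) (n : ℕ) :
    f ((n : ℝ) + 2) - f ((n : ℝ) + 1) < f ((n : ℝ) + 1) - f n := by
  have h := hcond (n + 1) 1 1 n.succ_pos one_pos one_pos
  simp only [Delta] at h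
  push_cast at h
  convert h using 3 <;> ring_nf

lemma Cond6a.add_sub_le_add_sub (hcond : Cond6a f) (hf : StrictMonoOn f (Set.Ici 0))
    {m n w : ℕ} (hmn : m ≤ n) (hw : 0 < w) :
    f ((n : ℝ) + w) - f n ≤ f ((m : ℝ) + w) - f m := by
  have hpos : 0 < (m : ℝ) + w := by positivity
  by_cases hm : f m = ⊥
  · rw [hm, EReal.sub_bot (ne_bot_of_strictMonoOn_Ici hf hpos)]
    exact le_top
  set g : ℕ → ℝ := fun p => (f p).toReal
  have hfg {p : ℕ} (hp : m ≤ p) : f p = g p := by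
    refine (EReal.coe_toReal (ne_top_of_strictMonoOn_Ici hf p.cast_nonneg) ?_).symm
    rcases hp.eq_or_lt with rfl | hp
    · exact hm
    · exact ne_bot_of_strictMonoOn_Ici hf (by exact_mod_cast (Nat.zero_le m).trans_lt hp)
  have hg : AntitoneOn (fun p => g (p + 1) - g p) (Set.Ici m) := by
    refine antitoneOn_nat_Ici_of_succ_le fun p hp => ?_
    have h := hcond.succ_sub_lt p
    rw [show (p : ℝ) + 2 = ((p + 2 : ℕ) : ℝ) by push_cast; ring,
      show (p : ℝ) + 1 = ((p + 1 : ℕ) : ℝ) by push_cast; ring,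
      hfg (by omega), hfg (by omega), hfg hp, ← EReal.coe_sub, ← EReal.coe_sub,
      EReal.coe_lt_coe_iff] at h
    exact h.le
  rw [← Nat.cast_add, ← Nat.cast_add, hfg (hmn.trans (Nat.le_add_right n w)), hfg hmn,
    hfg (Nat.le_add_right m w), hfg le_rfl, ← EReal.coe_sub, ← EReal.coe_sub,
    EReal.coe_le_coe_iff]
  exact add_sub_le_add_sub_of_antitoneOn_succ_sub hg hmn w

lemma Cond6a.delta_lt_sub_of_lt (hcond : Cond6a f) (hf : StrictMonoOn f (Set.Ici 0))
    {k a b M : ℕ} (hk : 0 < k) (ha : 0 < a) (hb : 0 < b) (hM : M < k * b) :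
    Delta f k a < f ((M : ℝ) + b) - f M := by
  obtain ⟨N, hN⟩ : ∃ N, k * b = N + 1 := Nat.exists_eq_add_one.2 (Nat.mul_pos hk hb)
  have hNR : (k : ℝ) * b = N + 1 := by exact_mod_cast hN
  calc Delta f k a < f (((k : ℝ) + 1) * b - 1) - f ((k : ℝ) * b - 1) := hcond k a b hk ha hb
    _ = f ((N : ℝ) + b) - f N := by
      rw [add_mul, one_mul, hNR, add_sub_cancel_right, add_right_comm, add_sub_cancel_right]
    _ ≤ f ((M : ℝ) + b) - f M := hcond.add_sub_le_add_sub hf (by omega) hb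

end

theorem cond6a_implies_cond5_general (f : ℝ → EReal)
    (hfmono : StrictMonoOn f (Set.Ici (0 : ℝ)))
    (hcond : Cond6a f) :
    Cond5 f := by
  intro a b k l r ha hb _ hlt
  constructor
  · convert hcond.delta_lt_sub_of_lt hfmono k.succ_pos ha hb hlt using 3 <;> push_cast <;> ring
  · have hM : (k + 1) * a < (k + 2) * a := Nat.mul_lt_mul_of_pos_right (by omega) ha
    have h := hcond.delta_lt_sub_of_lt hfmono (by omega) one_pos ha hM
    rw [Nat.cast_one] at h
    convert h using 1
    rw [Delta]
    push_cast
    ring_nf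

theorem cond6a_implies_cond5 (f : ℝ → EReal)
    (hfmono : StrictMonoOn f (Set.Ici (0 : ℝ)))
    (hftop : ∀ x : ℝ, 0 ≤ x → f x ≠ ⊤)
    (hcond : Cond6a f) :
    Cond5 f :=
  cond6a_implies_cond5_general f hfmono hcond

end FairDiv
end
end

section
/- For every c with −1 ≤ c < −1/2, the modified harmonic function h_c does not satisfy Condition 6a; that is, there exist k, a, b ∈ ℤ>0 such that h_c((k+1)b−1) − h_c(kb−1) ≤ h_c((k+1)a) − h_c(ka). -/
open scoped BigOperators

noncomputable section

namespace FairDiv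

/-!
Take `a = 1` and `k = b = n + 1`. The right-hand side is the single term `1 / (k + 1 + c)`; the
left-hand side is the sum of `1 / (k b + j + c)` over `j < b`. By convexity of `x ↦ 1 / x` that sum
is at most its trapezoid value `b / 2 · (1 / (k b + c) + 1 / ((k + 1) b - 1 + c)) ≈ 1 / k - 1 / (2 k²)`,
whereas `1 / (k + 1 + c) ≈ 1 / k - (1 + c) / k²`. As `1 + c < 1 / 2`, the trapezoid value is the
smaller one as soon as `n (-1 - 2 c) > 4`.
-/

theorem _root_.ConvexOn.map_add_map_le_of_add_eq {s : Set ℝ} {f : ℝ → ℝ} (hf : ConvexOn ℝ s f)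
    {a b x y : ℝ} (ha : a ∈ s) (hb : b ∈ s) (hx : x ∈ Set.Icc a b) (hxy : x + y = a + b) :
    f x + f y ≤ f a + f b := by
  obtain rfl : y = a + b - x := by linarith
  obtain ⟨hax, hxb⟩ := hx
  rcases hax.eq_or_lt with rfl | hlt
  · simp
  set t := (x - a) / (b - a)
  have hba : 0 < b - a := by linarith
  have ht0 : 0 ≤ t := div_nonneg (by linarith) hba.le
  have ht1 : t ≤ 1 := (div_le_one hba).2 (by linarith)
  have hx' : (1 - t) * a + t * b = x := by simp only [t]; field_simp; ring
  have hy' : t * a + (1 - t) * b = a + b - x := by linarith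
  have h1 := hf.2 ha hb (sub_nonneg.2 ht1) ht0 (sub_add_cancel 1 t)
  have h2 := hf.2 ha hb ht0 (sub_nonneg.2 ht1) (add_sub_cancel t 1)
  simp only [smul_eq_mul, hx', hy'] at h1 h2
  linarith

theorem _root_.ConvexOn.sum_range_le_trapezoid {s : Set ℝ} {f : ℝ → ℝ} (hf : ConvexOn ℝ s f)
    {a : ℝ} {n : ℕ} (ha : a ∈ s) (hb : a + n ∈ s) :
    ∑ j ∈ Finset.range (n + 1), f (a + j) ≤ (n + 1) / 2 * (f a + f (a + n)) := by
  have hpair : ∀ j ∈ Finset.range (n + 1),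
      f (a + j) + f (a + (n - j : ℕ)) ≤ f a + f (a + n) := by
    intro j hj
    have hjn : j ≤ n := Nat.lt_succ_iff.1 (Finset.mem_range.1 hj)
    have hjn' : (j : ℝ) ≤ n := Nat.cast_le.2 hjn
    refine hf.map_add_map_le_of_add_eq ha hb ⟨?_, ?_⟩ ?_ <;> push_cast [hjn] <;>
      linarith [(j.cast_nonneg : (0 : ℝ) ≤ j)]
  have hreflect : ∑ j ∈ Finset.range (n + 1), f (a + (n - j : ℕ))
      = ∑ j ∈ Finset.range (n + 1), f (a + j) :=
    Finset.sum_range_reflect (fun j => f (a + j)) (n + 1)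
  have hsum := Finset.sum_le_sum hpair
  rw [Finset.sum_add_distrib, hreflect, Finset.sum_const, Finset.card_range, nsmul_eq_mul] at hsum
  push_cast at hsum
  linarith

def shiftedHarmonic (c : ℝ) (x : ℕ) : ℝ :=
  ∑ t ∈ Finset.range x, 1 / ((t : ℝ) + 1 + c)

-- For `c = -1` the `t = 0` term of `shiftedHarmonic c` is the junk value `1 / 0 = 0`, which is
-- why one sum covers both cases of `hmod`.
theorem hmod_eq_shiftedHarmonic {c : ℝ} {x : ℕ} (hx : x ≠ 0) :
    hmod c x = shiftedHarmonic c x := by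
  unfold hmod shiftedHarmonic
  split_ifs with hc
  · subst hc
    obtain ⟨y, rfl⟩ := Nat.exists_eq_succ_of_ne_zero hx
    simp [Finset.sum_range_succ']
  · rfl

theorem shiftedHarmonic_succ_sub (c : ℝ) (x : ℕ) :
    shiftedHarmonic c (x + 1) - shiftedHarmonic c x = 1 / ((x : ℝ) + 1 + c) := by
  simp [shiftedHarmonic, Finset.sum_range_succ]

theorem shiftedHarmonic_add_sub_le {c : ℝ} {m : ℕ} (hm : 0 < (m : ℝ) + 1 + c) (n : ℕ) :
    shiftedHarmonic c (m + (n + 1)) - shiftedHarmonic c m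
      ≤ (n + 1) / 2 * (1 / ((m : ℝ) + 1 + c) + 1 / ((m : ℝ) + 1 + c + n)) := by
  have hinv : ConvexOn ℝ (Set.Ioi 0) fun x : ℝ => 1 / x := by
    simpa [one_div] using convexOn_zpow (𝕜 := ℝ) (-1)
  have hblock := hinv.sum_range_le_trapezoid (n := n) hm (by simp only [Set.mem_Ioi]; positivity)
  unfold shiftedHarmonic
  rw [Finset.sum_range_add, add_sub_cancel_left]
  convert hblock using 3
  push_cast
  ring

theorem trapezoid_inv_le_inv {c : ℝ} (hc : -1 ≤ c) {n : ℕ} (hn : 4 < n * (-1 - 2 * c)) :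
    ((n : ℝ) + 1) / 2 * (1 / ((n + 1) * (n + 1) + c) + 1 / ((n + 1) * (n + 1) + c + n))
      ≤ 1 / ((n + 1) + 1 + c) := by
  have hn1 : (4 : ℝ) < n := by nlinarith
  rw [div_add_div _ _ (by nlinarith) (by nlinarith), div_mul_div_comm,
    div_le_div_iff₀ (by nlinarith) (by nlinarith)]
  nlinarith [mul_pos (by linarith : (0 : ℝ) < n) (by linarith : (0 : ℝ) < n)]

theorem shiftedHarmonic_block_le {c : ℝ} (hc : -1 ≤ c) {n : ℕ} (hn : 4 < n * (-1 - 2 * c)) :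
    shiftedHarmonic c (n * (n + 2) + (n + 1)) - shiftedHarmonic c (n * (n + 2))
      ≤ shiftedHarmonic c (n + 1 + 1) - shiftedHarmonic c (n + 1) := by
  have hm : ((n * (n + 2) : ℕ) : ℝ) + 1 = (n + 1) * (n + 1) := by push_cast; ring
  rw [shiftedHarmonic_succ_sub]
  calc _ ≤ ((n : ℝ) + 1) / 2 * (1 / (((n * (n + 2) : ℕ) : ℝ) + 1 + c)
          + 1 / (((n * (n + 2) : ℕ) : ℝ) + 1 + c + n)) :=
        shiftedHarmonic_add_sub_le (by nlinarith) n
    _ ≤ _ := by rw [hm]; push_cast; exact trapezoid_inv_le_inv hc hn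

theorem hmod_not_cond6a (c : ℝ) (hc1 : -1 ≤ c) (hc2 : c < -1/2) :
    ∃ k a b : ℕ, 0 < k ∧ 0 < a ∧ 0 < b ∧
      hmod c ((k + 1) * b - 1) - hmod c (k * b - 1) ≤
        hmod c ((k + 1) * a) - hmod c (k * a) := by
  obtain ⟨n, hn⟩ := exists_nat_gt (4 / (-1 - 2 * c))
  have hn4 : 4 < n * (-1 - 2 * c) := (div_lt_iff₀ (by linarith)).1 hn
  have hn0 : n ≠ 0 := by rintro rfl; norm_num at hn4
  refine ⟨n + 1, 1, n + 1, n.succ_pos, one_pos, n.succ_pos, ?_⟩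
  rw [show (n + 1 + 1) * (n + 1) - 1 = n * (n + 2) + (n + 1) from Nat.sub_eq_of_eq_add (by ring),
    show (n + 1) * (n + 1) - 1 = n * (n + 2) from Nat.sub_eq_of_eq_add (by ring), mul_one, mul_one]
  have hm0 : n * (n + 2) ≠ 0 := Nat.mul_ne_zero hn0 (by omega)
  simp (disch := omega) only [hmod_eq_shiftedHarmonic]
  exact_mod_cast shiftedHarmonic_block_le hc1 hn4

end FairDiv
end
end
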